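/- Let μ, σ ∈ ℝ with μ ≠ 0 (normal parameters). Set e := Exp∘( (σ²/2)·X² + μ·X ) - 1 ∈ ℝ⟦X⟧. Then for all natural numbers n ≥ k: c_n( e^k / k! ) = Σ_{j=k}^{n} (n!/j!)·binom(j, n-j)·μ^{2j-n}·(σ²/2)^{n-j}·S₂(j,k), where μ^{2j-n} is the integer power of μ (with integer exponent 2j-n ∈ ℤ; terms with 2j < n vanish since then binom(j,n-j) = 0). -/

import Mathlib

open PowerSeries Finset

noncomputable section

/-- `cN n F = n! * (coefficient of X^n in F)`. -/
def cN (n : ℕ) (F : PowerSeries ℝ) : ℝ := (n.factorial : ℝ) * PowerSeries.coeff n F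

/-- Formal substitution `F ∘ G` (faithful when `G` has zero constant coefficient). -/
def pcomp (F G : PowerSeries ℝ) : PowerSeries ℝ :=
  PowerSeries.mk fun n =>
    ∑ k ∈ Finset.range (n + 1), (PowerSeries.coeff k F) * (PowerSeries.coeff n (G ^ k))

/-- The formal series of log(1+X). -/
def L : PowerSeries ℝ := PowerSeries.mk fun n => if n = 0 then 0 else (-1 : ℝ) ^ (n - 1) / n

/-- Falling factorial `(y)_m`. -/
def ff (y : ℝ) (m : ℕ) : ℝ := ∏ i ∈ Finset.range m, (y - i)

/-- Rising factorial `⟨y⟩_m`. -/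
def rf (y : ℝ) (m : ℕ) : ℝ := ∏ i ∈ Finset.range m, (y + i)

/-- Degenerate falling factorial `(x)_{n,λ}`. -/
def ffl (x : ℝ) (n : ℕ) (lam : ℝ) : ℝ := ∏ i ∈ Finset.range n, (x - i * lam)

/-- Stirling numbers of the second kind. -/
def S2 (n k : ℕ) : ℝ :=
  (k.factorial : ℝ)⁻¹ * ∑ j ∈ Finset.range (k + 1), (-1 : ℝ) ^ (k - j) * (k.choose j) * (j : ℝ) ^ n

/-- The falling factorial polynomial `x(x-1)⋯(x-n+1)`. -/
def fallingPoly (n : ℕ) : Polynomial ℝ := ∏ i ∈ Finset.range n, (Polynomial.X - Polynomial.C (i : ℝ))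

/-- (Signed) Stirling numbers of the first kind. -/
def S1 (n k : ℕ) : ℝ := (fallingPoly n).coeff k

/-- Degenerate Stirling numbers of the second kind. -/
def S2d (lam : ℝ) (n k : ℕ) : ℝ :=
  (k.factorial : ℝ)⁻¹ *
    ∑ j ∈ Finset.range (k + 1), (-1 : ℝ) ^ (k - j) * (k.choose j) * ffl (j : ℝ) n lam

/-- Formal degenerate exponential `e_λ`. -/
def degExp (lam : ℝ) : PowerSeries ℝ := PowerSeries.mk fun n => ffl 1 n lam / n.factorial

/-- Formal degenerate logarithm `Λ_λ` of `1+X`. -/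
def degLog (lam : ℝ) : PowerSeries ℝ :=
  lam⁻¹ • PowerSeries.mk fun n => if n = 0 then 0 else ff lam n / n.factorial

/-- Degenerate Stirling numbers of the first kind. -/
def S1d (lam : ℝ) (n k : ℕ) : ℝ := cN n ((k.factorial : ℝ)⁻¹ • (degLog lam) ^ k)

/-- Binomial series `(1+X)^c`. -/
def binser (c : ℝ) : PowerSeries ℝ := PowerSeries.mk fun n => ff c n / n.factorial

/-- Frobenius–Euler numbers of order `j`. -/
def FE (u : ℝ) (j n : ℕ) : ℝ :=
  cN n (((1 - u) • (PowerSeries.exp ℝ - PowerSeries.C u)⁻¹) ^ j)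

/-! Substituting `G = (σ²/2)X² + μX` into the exponential generating function
`(exp X - 1)^k / k! = ∑ S₂(j,k) X^j / j!` gives `c_n = ∑_j n!/j! · S₂(j,k) · [X^n] G^j`,
and `G^j = X^j (σ²/2 · X + μ)^j` has `X^n`-coefficient
`binom(j, n-j) (σ²/2)^(n-j) μ^(2j-n)`. -/

theorem Nat.cast_choose_mul_pow_sub {K : Type*} [DivisionRing K] (b : K) (i j : ℕ) :
    (j.choose i : K) * b ^ (j - i) = j.choose i * b ^ ((j : ℤ) - i) := by
  rcases le_or_gt i j with hij | hji
  · rw [← Nat.cast_sub hij, zpow_natCast]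
  · rw [Nat.choose_eq_zero_of_lt hji, Nat.cast_zero, zero_mul, zero_mul]

namespace PowerSeries

theorem coeff_pow_eq_zero_of_lt {R : Type*} [CommSemiring R] {G : R⟦X⟧}
    (hG : constantCoeff G = 0) {n d : ℕ} (h : n < d) : coeff n (G ^ d) = 0 :=
  X_pow_dvd_iff.mp (pow_dvd_pow_of_dvd (X_dvd_iff.mpr hG) d) n h

theorem coeff_subst_eq_sum_range {R : Type*} [CommRing R] {G : R⟦X⟧}
    (hG : constantCoeff G = 0) (F : R⟦X⟧) (n : ℕ) :
    coeff n (F.subst G) = ∑ k ∈ range (n + 1), coeff k F * coeff n (G ^ k) := by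
  rw [coeff_subst' (HasSubst.of_constantCoeff_zero' hG)]
  refine finsum_eq_sum_of_support_subset _ fun k hk => ?_
  by_contra hkn
  simp only [coe_range, Set.mem_Iio, not_lt] at hkn
  exact hk (show coeff k F • coeff n (G ^ k) = 0 by
    rw [coeff_pow_eq_zero_of_lt hG (by omega), smul_zero])

theorem coeff_smul_X_sq_add_smul_X_pow {R : Type*} [CommSemiring R] (a b : R) (i j : ℕ) :
    coeff (i + j) ((a • X ^ 2 + b • X : R⟦X⟧) ^ j) = j.choose i * a ^ i * b ^ (j - i) := by
  have hfactor : (a • X ^ 2 + b • X : R⟦X⟧) = (C a * X + C b) * X := by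
    rw [smul_eq_C_mul, smul_eq_C_mul]; ring
  rw [hfactor, mul_pow, coeff_mul_X_pow, add_pow, map_sum]
  have hterm : ∀ m ∈ range (j + 1),
      coeff i ((C a * X) ^ m * C b ^ (j - m) * (j.choose m : R⟦X⟧))
        = if i = m then j.choose m * a ^ m * b ^ (j - m) else 0 := by
    intro m _
    rw [show (C a * X) ^ m * C b ^ (j - m) * (j.choose m : R⟦X⟧)
        = C (j.choose m * a ^ m * b ^ (j - m)) * X ^ m by
          simp only [map_mul, map_pow, map_natCast]; ring,
      coeff_C_mul_X_pow]
  rw [sum_congr rfl hterm, sum_ite_eq, ite_eq_left_iff, mem_range, not_lt]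
  intro hji
  rw [Nat.choose_eq_zero_of_lt (by omega), Nat.cast_zero, zero_mul, zero_mul]

theorem coeff_exp_pow {K : Type*} [Field K] [CharZero K] (m j : ℕ) :
    coeff j (exp K ^ m) = (m : K) ^ j / j.factorial := by
  rw [exp_pow_eq_rescale_exp, coeff_rescale, coeff_exp, map_div₀, map_one, map_natCast,
    mul_one_div]

theorem coeff_exp_sub_one_pow {K : Type*} [Field K] [CharZero K] (k j : ℕ) :
    coeff j ((exp K - 1) ^ k) =
      (∑ m ∈ range (k + 1), (-1 : K) ^ (k - m) * k.choose m * (m : K) ^ j) / j.factorial := by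
  rw [sub_eq_add_neg, add_pow, map_sum, sum_div]
  refine sum_congr rfl fun m _ => ?_
  rw [show exp K ^ m * (-1) ^ (k - m) * (k.choose m : K⟦X⟧)
      = C ((-1 : K) ^ (k - m) * k.choose m) * exp K ^ m by
        simp only [map_mul, map_pow, map_neg, map_one, map_natCast]; ring,
    coeff_C_mul, coeff_exp_pow, mul_div_assoc]

end PowerSeries

theorem smul_exp_sub_one_pow_eq_mk_S2 (k : ℕ) :
    (k.factorial : ℝ)⁻¹ • (exp ℝ - 1) ^ k = mk fun j => S2 j k / j.factorial := by
  ext j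
  rw [coeff_smul, coeff_exp_sub_one_pow, coeff_mk, S2, smul_eq_mul, mul_div_assoc]

theorem S2_eq_zero_of_lt {j k : ℕ} (h : j < k) : S2 j k = 0 := by
  have hzero := congrArg (coeff j) (smul_exp_sub_one_pow_eq_mk_S2 k)
  rw [coeff_smul, coeff_pow_eq_zero_of_lt (by simp) h, smul_zero, coeff_mk, eq_comm,
    div_eq_zero_iff] at hzero
  exact hzero.resolve_right (Nat.cast_ne_zero.mpr j.factorial_ne_zero)

theorem pcomp_eq_subst {G : ℝ⟦X⟧} (hG : constantCoeff G = 0) (F : ℝ⟦X⟧) :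
    pcomp F G = F.subst G := by
  ext n
  rw [pcomp, coeff_mk, coeff_subst_eq_sum_range hG]

theorem stmt14_general (μ σ : ℝ) (n k : ℕ) :
    cN n ((k.factorial : ℝ)⁻¹ •
        (pcomp (PowerSeries.exp ℝ)
          ((σ ^ 2 / 2) • PowerSeries.X ^ 2 + μ • PowerSeries.X) - 1) ^ k)
      = ∑ j ∈ Finset.Icc k n,
          ((n.factorial : ℝ) / (j.factorial : ℝ)) * (j.choose (n - j) : ℝ) *
            μ ^ ((2 * j : ℤ) - (n : ℤ)) * (σ ^ 2 / 2) ^ (n - j) * S2 j k := by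
  set G : ℝ⟦X⟧ := (σ ^ 2 / 2) • X ^ 2 + μ • X
  have hG : constantCoeff G = 0 := by simp [G]
  have hsubst : HasSubst G := HasSubst.of_constantCoeff_zero' hG
  have hcomp : (k.factorial : ℝ)⁻¹ • (pcomp (exp ℝ) G - 1) ^ k
      = (mk fun j => S2 j k / j.factorial).subst G := by
    rw [← smul_exp_sub_one_pow_eq_mk_S2, subst_smul hsubst, subst_pow hsubst, subst_sub hsubst,
      pcomp_eq_subst hG, ← coe_substAlgHom hsubst, map_one]
  have hIcc : Icc k n ⊆ range (n + 1) := fun j hj => mem_range.mpr (by grind)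
  have hvanish : ∀ j ∈ range (n + 1), j ∉ Icc k n →
      coeff j (mk fun j => S2 j k / j.factorial) * coeff n (G ^ j) = 0 := by
    intro j hj hjk
    rw [coeff_mk, S2_eq_zero_of_lt (by grind), zero_div, zero_mul]
  rw [cN, hcomp, coeff_subst_eq_sum_range hG, ← sum_subset hIcc hvanish, mul_sum]
  refine sum_congr rfl fun j hj => ?_
  obtain ⟨-, hjn⟩ := mem_Icc.mp hj
  have hcoeff :
      coeff n (G ^ j) = j.choose (n - j) * μ ^ ((2 * j : ℤ) - n) * (σ ^ 2 / 2) ^ (n - j) := by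
    have h := coeff_smul_X_sq_add_smul_X_pow (σ ^ 2 / 2) μ (n - j) j
    rwa [Nat.sub_add_cancel hjn, mul_right_comm, Nat.cast_choose_mul_pow_sub,
      show (j : ℤ) - (n - j : ℕ) = 2 * j - n by omega] at h
  rw [coeff_mk, hcoeff]
  ring

theorem stmt14 (μ σ : ℝ) (hμ : μ ≠ 0) (n k : ℕ) (hkn : k ≤ n) :
    cN n ((k.factorial : ℝ)⁻¹ •
        (pcomp (PowerSeries.exp ℝ)
          ((σ ^ 2 / 2) • PowerSeries.X ^ 2 + μ • PowerSeries.X) - 1) ^ k)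
      = ∑ j ∈ Finset.Icc k n,
          ((n.factorial : ℝ) / (j.factorial : ℝ)) * (j.choose (n - j) : ℝ) *
            μ ^ ((2 * j : ℤ) - (n : ℤ)) * (σ ^ 2 / 2) ^ (n - j) * S2 j k :=
  stmt14_general μ σ n k
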